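/- Let X : [0,T) × ℝ → ℝ² be a smooth family of closed curves evolving by the area-preserving mean-curvature flow, i.e. whose normal velocity satisfies ∂ₜX(t,u) · n(t,u) = −κ(t,u) + (1/L(t)) ∫₀¹ κ(t,w) |∂ᵤX(t,w)| dw for all (t,u). Then the length satisfies dL/dt (t) = −∫₀¹ κ(t,u)² |∂ᵤX(t,u)| du + (1/L(t)) (∫₀¹ κ(t,u) |∂ᵤX(t,u)| du)², and this quantity is ≤ 0 for every t; consequently L is non-increasing on [0,T). Moreover dL/dt (t) = 0 holds if and only if u ↦ κ(t,u) is constant. -/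

import Mathlib

/-!
Differentiating `L = ∫₀¹ |∂ᵤX| du` under the integral sign gives `L' = ∫₀¹ ⟨∂ₜ∂ᵤX, τ⟩ du`;
integrating by parts over a period and using the Frenet equation `∂ᵤτ = -κ |∂ᵤX| n` turns this
into the first variation `L' = ∫₀¹ κ ⟨∂ₜX, n⟩ |∂ᵤX| du`. Inserting the flow gives
`L' = -(∫ κ² ds - (∫ κ ds)² / L) = -∫ (κ - κ̄)² ds ≤ 0`, where `ds = |∂ᵤX| du` and
`κ̄ = (∫ κ ds) / L` is the average curvature; equality forces `κ ≡ κ̄`.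
-/

open Set MeasureTheory Real Filter
open scoped RealInnerProductSpace

noncomputable section

abbrev E2 : Type := EuclideanSpace ℝ (Fin 2)

def perp (p : E2) : E2 := (WithLp.equiv 2 (Fin 2 → ℝ)).symm ![p 1, -(p 0)]

def unitNormal (Y : ℝ → E2) (u : ℝ) : E2 := ‖deriv Y u‖⁻¹ • perp (deriv Y u)

def curvature (Y : ℝ → E2) (u : ℝ) : ℝ :=
  -(‖deriv Y u‖⁻¹ * ⟪deriv (fun v => ‖deriv Y v‖⁻¹ • deriv Y v) u, unitNormal Y u⟫)

def curveLength (Y : ℝ → E2) : ℝ := ∫ u in (0:ℝ)..1, ‖deriv Y u‖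

def enclosedArea (Y : ℝ → E2) : ℝ := (1/2) * ∫ u in (0:ℝ)..1, ⟪Y u, perp (deriv Y u)⟫

def IsSmoothClosedCurve (Y : ℝ → E2) : Prop :=
  ContDiff ℝ 2 Y ∧ (∀ u, Y (u + 1) = Y u) ∧ ∀ u, deriv Y u ≠ 0

def IsSmoothClosedFamily (T : ℝ) (X : ℝ → ℝ → E2) : Prop :=
  ContDiffOn ℝ 2 (fun p : ℝ × ℝ => X p.1 p.2) (Ico 0 T ×ˢ univ) ∧
  ∀ t ∈ Ico 0 T, IsSmoothClosedCurve (X t)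

open Function

lemma perp_apply_zero (p : E2) : perp p 0 = p 1 := by simp [perp]

lemma perp_apply_one (p : E2) : perp p 1 = -(p 0) := by simp [perp]

lemma inner_E2 (x y : E2) : ⟪x, y⟫ = x 0 * y 0 + x 1 * y 1 := by
  simp [PiLp.inner_apply, Fin.sum_univ_two, mul_comm]

lemma continuous_perp : Continuous perp := by
  unfold perp
  simp only [WithLp.equiv_symm_apply]
  fun_prop

lemma eq_inner_smul_of_inner_eq_zero {q x : E2} (hq : q ≠ 0) (h : ⟪x, q⟫ = 0) :
    x = ⟪x, ‖q‖⁻¹ • perp q⟫ • (‖q‖⁻¹ • perp q) := by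
  have hsq : ‖q‖ ^ 2 = q 0 ^ 2 + q 1 ^ 2 := by
    rw [← real_inner_self_eq_norm_sq, inner_E2]; ring
  have hq2 : q 0 ^ 2 + q 1 ^ 2 ≠ 0 := by rw [← hsq]; positivity
  rw [inner_E2] at h
  rw [real_inner_smul_right, smul_smul, mul_right_comm, ← mul_inv, ← sq, hsq, inner_E2,
    perp_apply_zero, perp_apply_one]
  ext i
  fin_cases i <;>
    simp only [Fin.zero_eta, Fin.mk_one, Fin.isValue, mul_neg, PiLp.smul_apply, perp_apply_zero,
      perp_apply_one, smul_eq_mul] <;> field_simp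
  · linear_combination q 0 * h
  · linear_combination q 1 * h

lemma HasDerivWithinAt.norm {F : Type*} [NormedAddCommGroup F] [InnerProductSpace ℝ F]
    {f : ℝ → F} {f' : F} {s : Set ℝ} {x : ℝ} (hf : HasDerivWithinAt f f' s x) (h0 : f x ≠ 0) :
    HasDerivWithinAt (fun y => ‖f y‖) (⟪f', f x⟫ / ‖f x‖) s x := by
  have h := (hf.norm_sq).sqrt (pow_ne_zero 2 (norm_ne_zero_iff.2 h0))
  simp only [Real.sqrt_sq (norm_nonneg _)] at h
  convert h using 1
  rw [real_inner_comm]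
  field_simp

lemma Function.Periodic.deriv {F : Type*} [NormedAddCommGroup F] [NormedSpace ℝ F]
    {f : ℝ → F} {c : ℝ} (hf : Periodic f c) : Periodic (deriv f) c :=
  fun u => by rw [← deriv_comp_add_const, funext hf]

lemma Function.Periodic.exists_forall_eq_iff_Icc {α : Type*} {f : ℝ → α} {c : ℝ}
    (hf : Periodic f c) (hc : 0 < c) :
    (∃ a, ∀ u ∈ Icc 0 c, f u = a) ↔ ∃ a, ∀ u, f u = a := by
  refine ⟨fun ⟨a, ha⟩ => ⟨a, fun u => ?_⟩, fun ⟨a, ha⟩ => ⟨a, fun u _ => ha u⟩⟩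
  obtain ⟨v, hv, hvu⟩ := hf.exists_mem_Ico₀ hc u
  rw [hvu, ha v (Ico_subset_Icc_self hv)]

def unitTangent (Y : ℝ → E2) (u : ℝ) : E2 := ‖deriv Y u‖⁻¹ • deriv Y u

section Curve

variable {Y : ℝ → E2}

lemma curvature_eq_neg_inner_deriv_unitTangent (Y : ℝ → E2) (u : ℝ) :
    curvature Y u = -(‖deriv Y u‖⁻¹ * ⟪deriv (unitTangent Y) u, unitNormal Y u⟫) := rfl

lemma contDiff_unitTangent (hY : ContDiff ℝ 2 Y) (hreg : ∀ u, deriv Y u ≠ 0) :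
    ContDiff ℝ 1 (unitTangent Y) :=
  ((hY.deriv'.norm ℝ hreg).inv fun u => norm_ne_zero_iff.2 (hreg u)).smul hY.deriv'

lemma norm_unitTangent {u : ℝ} (hu : deriv Y u ≠ 0) : ‖unitTangent Y u‖ = 1 := by
  rw [unitTangent, norm_smul, norm_inv, norm_norm, inv_mul_cancel₀ (norm_ne_zero_iff.2 hu)]

lemma inner_deriv_unitTangent_self (hY : ContDiff ℝ 2 Y) (hreg : ∀ u, deriv Y u ≠ 0) (u : ℝ) :
    ⟪deriv (unitTangent Y) u, unitTangent Y u⟫ = 0 := by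
  have hτ := ((contDiff_unitTangent hY hreg).differentiable one_ne_zero u).hasDerivAt
  have hconst : HasDerivAt (fun v => ‖unitTangent Y v‖ ^ 2) 0 u := by
    simp only [norm_unitTangent (hreg _), one_pow]
    exact hasDerivAt_const u 1
  have h := hτ.norm_sq.unique hconst
  rw [real_inner_comm]
  linarith

lemma deriv_unitTangent (hY : ContDiff ℝ 2 Y) (hreg : ∀ u, deriv Y u ≠ 0) (u : ℝ) :
    deriv (unitTangent Y) u = -(curvature Y u * ‖deriv Y u‖) • unitNormal Y u := by
  have hg : ‖deriv Y u‖ ≠ 0 := norm_ne_zero_iff.2 (hreg u)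
  have hτg : ⟪deriv (unitTangent Y) u, deriv Y u⟫ = 0 := by
    have h := inner_deriv_unitTangent_self hY hreg u
    rwa [unitTangent, real_inner_smul_right, mul_eq_zero, or_iff_right (inv_ne_zero hg)] at h
  rw [curvature_eq_neg_inner_deriv_unitTangent, neg_mul, neg_neg, mul_right_comm,
    inv_mul_cancel₀ hg, one_mul]
  exact eq_inner_smul_of_inner_eq_zero (hreg u) hτg

lemma continuous_curvature (hY : ContDiff ℝ 2 Y) (hreg : ∀ u, deriv Y u ≠ 0) :
    Continuous (curvature Y) := by
  have hg := hY.continuous_deriv one_le_two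
  have hinv : Continuous fun u => ‖deriv Y u‖⁻¹ :=
    hg.norm.inv₀ fun u => norm_ne_zero_iff.2 (hreg u)
  exact (hinv.mul (((contDiff_unitTangent hY hreg).continuous_deriv le_rfl).inner
    (hinv.smul (continuous_perp.comp hg)))).neg

namespace IsSmoothClosedCurve

variable (hY : IsSmoothClosedCurve Y)
include hY

lemma periodic_deriv : Periodic (deriv Y) 1 := Periodic.deriv hY.2.1

lemma periodic_unitTangent : Periodic (unitTangent Y) 1 := fun u => by
  simp only [unitTangent, hY.periodic_deriv u]

lemma periodic_unitNormal : Periodic (unitNormal Y) 1 := fun u => by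
  simp only [unitNormal, hY.periodic_deriv u]

lemma periodic_curvature : Periodic (curvature Y) 1 := fun u => by
  simp only [curvature_eq_neg_inner_deriv_unitTangent, hY.periodic_deriv u,
    hY.periodic_unitTangent.deriv u, hY.periodic_unitNormal u]

end IsSmoothClosedCurve

end Curve

lemma integral_inner_deriv_eq_neg_of_periodic {F : Type*} [NormedAddCommGroup F]
    [InnerProductSpace ℝ F] {f g f' g' : ℝ → F} {c : ℝ}
    (hf : ∀ u, HasDerivAt f (f' u) u) (hg : ∀ u, HasDerivAt g (g' u) u)
    (hf' : Continuous f') (hg' : Continuous g') (hfc : Periodic f c) (hgc : Periodic g c) :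
    ∫ u in (0:ℝ)..c, ⟪f' u, g u⟫ = -∫ u in (0:ℝ)..c, ⟪f u, g' u⟫ := by
  have hfcont : Continuous f := continuous_iff_continuousAt.2 fun u => (hf u).continuousAt
  have hgcont : Continuous g := continuous_iff_continuousAt.2 fun u => (hg u).continuousAt
  have h1 : IntervalIntegrable (fun u => ⟪f' u, g u⟫) volume 0 c :=
    (hf'.inner hgcont).intervalIntegrable _ _
  have h2 : IntervalIntegrable (fun u => ⟪f u, g' u⟫) volume 0 c :=
    (hfcont.inner hg').intervalIntegrable _ _
  have hftc : ∫ u in (0:ℝ)..c, (⟪f u, g' u⟫ + ⟪f' u, g u⟫) = 0 := by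
    rw [intervalIntegral.integral_eq_sub_of_hasDerivAt (fun u _ => ((hf u).inner ℝ (hg u)))
      (h2.add h1), ← zero_add c, hfc 0, hgc 0, sub_self]
  rw [intervalIntegral.integral_add h2 h1] at hftc
  linarith

/-- Unnormalized: `(∫ w) · Var κ` for the probability density `w / ∫ w`. -/
def weightedVariance (κ w : ℝ → ℝ) (a b : ℝ) : ℝ :=
  (∫ u in a..b, κ u ^ 2 * w u) - (∫ u in a..b, w u)⁻¹ * (∫ u in a..b, κ u * w u) ^ 2

section WeightedVariance

lemma neg_weightedVariance (κ w : ℝ → ℝ) (a b : ℝ) :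
    -weightedVariance κ w a b =
      -(∫ u in a..b, κ u ^ 2 * w u) + (∫ u in a..b, w u)⁻¹ * (∫ u in a..b, κ u * w u) ^ 2 := by
  rw [weightedVariance]; ring

variable {κ w : ℝ → ℝ} {a b : ℝ}

lemma weightedVariance_eq_integral (hκ : Continuous κ) (hw : Continuous w) :
    weightedVariance κ w a b =
      ∫ u in a..b, (κ u - (∫ v in a..b, κ v * w v) / ∫ v in a..b, w v) ^ 2 * w u := by
  rw [weightedVariance]
  set L := ∫ v in a..b, w v
  set C := ∫ v in a..b, κ v * w v
  have hw' : IntervalIntegrable w volume a b := hw.intervalIntegrable _ _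
  have hκw : IntervalIntegrable (fun u => κ u * w u) volume a b :=
    (hκ.mul hw).intervalIntegrable _ _
  have hκ2w : IntervalIntegrable (fun u => κ u ^ 2 * w u) volume a b :=
    ((hκ.pow 2).mul hw).intervalIntegrable _ _
  have hexpand : ∀ u, (κ u - C / L) ^ 2 * w u =
      κ u ^ 2 * w u - 2 * (C / L) * (κ u * w u) + (C / L) ^ 2 * w u := fun u => by ring
  simp only [hexpand]
  rw [intervalIntegral.integral_add (hκ2w.sub (hκw.const_mul _)) (hw'.const_mul _),
    intervalIntegral.integral_sub hκ2w (hκw.const_mul _), intervalIntegral.integral_const_mul,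
    intervalIntegral.integral_const_mul]
  rcases eq_or_ne L 0 with hL | hL
  · simp [hL]
  · field_simp
    ring

lemma weightedVariance_nonneg (hκ : Continuous κ) (hw : Continuous w)
    (hw0 : ∀ u ∈ Icc a b, 0 ≤ w u) (hab : a ≤ b) : 0 ≤ weightedVariance κ w a b := by
  rw [weightedVariance_eq_integral hκ hw]
  exact intervalIntegral.integral_nonneg hab fun u hu => mul_nonneg (sq_nonneg _) (hw0 u hu)

lemma weightedVariance_eq_zero_iff (hκ : Continuous κ) (hw : Continuous w)
    (hw0 : ∀ u ∈ Icc a b, 0 < w u) (hab : a < b) :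
    weightedVariance κ w a b = 0 ↔ ∃ c, ∀ u ∈ Icc a b, κ u = c := by
  constructor
  · rw [weightedVariance_eq_integral hκ hw]
    set c := (∫ v in a..b, κ v * w v) / ∫ v in a..b, w v
    intro h
    have hcont : Continuous fun u => (κ u - c) ^ 2 * w u :=
      ((hκ.sub continuous_const).pow 2).mul hw
    rw [intervalIntegral.integral_eq_zero_iff_of_le_of_nonneg_ae hab.le
      (ae_restrict_of_forall_mem measurableSet_Ioc fun u hu =>
        mul_nonneg (sq_nonneg _) (hw0 u (Ioc_subset_Icc_self hu)).le)
      (hcont.intervalIntegrable _ _), Measure.restrict_congr_set Ioc_ae_eq_Icc] at h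
    refine ⟨c, fun u hu => ?_⟩
    have hu0 := Measure.eqOn_Icc_of_ae_eq volume hab.ne h hcont.continuousOn
      continuousOn_const hu
    simpa [(hw0 u hu).ne', sub_eq_zero] using hu0
  · rintro ⟨c, hc⟩
    have hL : (∫ u in a..b, w u) ≠ 0 :=
      (intervalIntegral.intervalIntegral_pos_of_pos_on (hw.intervalIntegrable _ _)
        (fun u hu => hw0 u (Ioo_subset_Icc_self hu)) hab).ne'
    have hconst : ∀ n : ℕ, (∫ u in a..b, κ u ^ n * w u) = c ^ n * ∫ u in a..b, w u := by
      intro n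
      rw [← intervalIntegral.integral_const_mul]
      refine intervalIntegral.integral_congr fun u hu => ?_
      rw [hc u (by rwa [uIcc_of_le hab.le] at hu)]
    have h1 := hconst 1
    simp only [pow_one] at h1
    rw [weightedVariance, hconst 2, h1]
    field_simp
    ring

end WeightedVariance

lemma Convex.abs_sub_sub_mul_le_of_hasDerivWithinAt {f f' : ℝ → ℝ} {K : Set ℝ} {C s t : ℝ}
    (hK : Convex ℝ K) (hf : ∀ σ ∈ K, HasDerivWithinAt f (f' σ) K σ)
    (hbound : ∀ σ ∈ K, |f' σ - f' t| ≤ C) (ht : t ∈ K) (hs : s ∈ K) :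
    |f s - f t - (s - t) * f' t| ≤ C * |s - t| :=
  calc |f s - f t - (s - t) * f' t| = |(f s - s * f' t) - (f t - t * f' t)| := by ring_nf
    _ ≤ C * |s - t| := hK.norm_image_sub_le_of_norm_hasDerivWithin_le
        (fun σ hσ => ((hf σ hσ).sub ((hasDerivWithinAt_id σ K).mul_const (f' t))).congr_deriv
          (by ring)) hbound ht hs

lemma hasDerivWithinAt_intervalIntegral_of_continuousOn {φ ψ : ℝ → ℝ → ℝ} {J : Set ℝ}
    {t a b : ℝ} (hJ : Convex ℝ J) (ht : t ∈ J) (hab : a ≤ b)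
    (hφ : ∀ s ∈ J, ∀ u ∈ Icc a b, HasDerivWithinAt (φ · u) (ψ s u) J s)
    (hψ : ContinuousOn (uncurry ψ) (J ×ˢ Icc a b))
    (hint : ∀ s ∈ J, IntervalIntegrable (φ s) volume a b) :
    HasDerivWithinAt (fun s => ∫ u in a..b, φ s u) (∫ u in a..b, ψ t u) J t := by
  rw [hasDerivWithinAt_iff_isLittleO, Asymptotics.isLittleO_iff]
  intro ε hε
  set ε' := ε / (b - a + 1)
  have hε' : 0 < ε' := div_pos hε (by linarith)
  -- `ψ s` is uniformly `ε'`-close to `ψ t` for `s` near `t`, since `Icc a b` is compact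
  obtain ⟨v, hv, hvψ⟩ := isCompact_Icc.mem_uniformity_of_prod hψ ht (Metric.dist_mem_uniformity hε')
  obtain ⟨δ, hδ, hδv⟩ := Metric.mem_nhdsWithin_iff.1 hv
  filter_upwards [inter_mem_nhdsWithin J (Metric.ball_mem_nhds t hδ)] with s hs
  have hpointwise : ∀ u ∈ Icc a b, |φ s u - φ t u - (s - t) * ψ t u| ≤ ε' * |s - t| :=
    fun u hu => (hJ.inter (convex_ball t δ)).abs_sub_sub_mul_le_of_hasDerivWithinAt
      (fun σ hσ => (hφ σ hσ.1 u hu).mono inter_subset_left)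
      (fun σ hσ => (hvψ σ (hδv ⟨hσ.2, hσ.1⟩) u hu).le) ⟨ht, Metric.mem_ball_self hδ⟩ hs
  have hψt : IntervalIntegrable (ψ t) volume a b :=
    ((hψ.comp (continuousOn_const.prodMk continuousOn_id) fun u hu => ⟨ht, hu⟩).mono
      (uIcc_of_le hab).subset).intervalIntegrable
  rw [smul_eq_mul, ← intervalIntegral.integral_const_mul,
    ← intervalIntegral.integral_sub (hint s hs.1) (hint t ht),
    ← intervalIntegral.integral_sub ((hint s hs.1).sub (hint t ht)) (hψt.const_mul _),
    Real.norm_eq_abs (s - t)]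
  calc _ ≤ ε' * |s - t| * |b - a| := intervalIntegral.norm_integral_le_of_norm_le_const
        fun u hu => hpointwise u (Ioc_subset_Icc_self (by rwa [uIoc_of_le hab] at hu))
    _ ≤ ε * |s - t| := by
      rw [abs_of_nonneg (sub_nonneg.2 hab), mul_right_comm]
      refine mul_le_mul_of_nonneg_right ?_ (abs_nonneg _)
      rw [div_mul_eq_mul_div, div_le_iff₀ (by linarith)]
      nlinarith

section PartialDerivatives

variable {E : Type*} [NormedAddCommGroup E] [NormedSpace ℝ E] {I : Set ℝ} {s u : ℝ}

lemma HasFDerivWithinAt.hasDerivAt_snd_slice {G : ℝ × ℝ → E} {G' : ℝ × ℝ →L[ℝ] E}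
    (h : HasFDerivWithinAt G G' (I ×ˢ univ) (s, u)) (hs : s ∈ I) :
    HasDerivAt (fun v => G (s, v)) (G' (0, 1)) u := by
  have h' := h.comp_hasDerivWithinAt (s := univ) u
    ((hasDerivAt_const u s).prodMk (hasDerivAt_id u)).hasDerivWithinAt
    fun v _ => mk_mem_prod hs (mem_univ v)
  rwa [hasDerivWithinAt_univ] at h'

lemma HasFDerivWithinAt.hasDerivWithinAt_fst_slice {G : ℝ × ℝ → E} {G' : ℝ × ℝ →L[ℝ] E}
    (h : HasFDerivWithinAt G G' (I ×ˢ univ) (s, u)) :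
    HasDerivWithinAt (fun σ => G (σ, u)) (G' (1, 0)) I s :=
  h.comp_hasDerivWithinAt s ((hasDerivAt_id s).prodMk (hasDerivAt_const s u)).hasDerivWithinAt
    fun _ hσ => mk_mem_prod hσ (mem_univ u)

/-- `∂ₛ∂ᵤF` -/
def mixedPartial (F : ℝ → ℝ → E) (I : Set ℝ) (p : ℝ × ℝ) : E :=
  fderivWithin ℝ (fderivWithin ℝ (uncurry F) (I ×ˢ univ)) (I ×ˢ univ) p (1, 0) (0, 1)

variable {F : ℝ → ℝ → E}

lemma deriv_eq_fderivWithin_uncurry (hF : DifferentiableOn ℝ (uncurry F) (I ×ˢ univ))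
    (hs : s ∈ I) : deriv (F s) u = fderivWithin ℝ (uncurry F) (I ×ˢ univ) (s, u) (0, 1) :=
  ((hF (s, u) (mk_mem_prod hs (mem_univ u))).hasFDerivWithinAt.hasDerivAt_snd_slice hs).deriv

lemma continuousOn_deriv_uncurry (hF : ContDiffOn ℝ 1 (uncurry F) (I ×ˢ univ))
    (hI : UniqueDiffOn ℝ I) : ContinuousOn (fun p : ℝ × ℝ => deriv (F p.1) p.2) (I ×ˢ univ) := by
  refine (((hF.continuousOn_fderivWithin (hI.prod uniqueDiffOn_univ) le_rfl).clm_apply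
    (continuousOn_const (c := ((0:ℝ), (1:ℝ)))))).congr fun p hp => ?_
  exact deriv_eq_fderivWithin_uncurry (hF.differentiableOn one_ne_zero) hp.1

variable (hF : ContDiffOn ℝ 2 (uncurry F) (I ×ˢ univ)) (hI : UniqueDiffOn ℝ I)
include hF hI

lemma continuousOn_mixedPartial : ContinuousOn (mixedPartial F I) (I ×ˢ univ) :=
  (((hF.fderivWithin (hI.prod uniqueDiffOn_univ) (by norm_num)).continuousOn_fderivWithin
    (hI.prod uniqueDiffOn_univ) le_rfl).clm_apply
    (continuousOn_const (c := ((1:ℝ), (0:ℝ))))).clm_apply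
    (continuousOn_const (c := ((0:ℝ), (1:ℝ))))

lemma hasDerivWithinAt_deriv_mixedPartial (hs : s ∈ I) :
    HasDerivWithinAt (fun σ => deriv (F σ) u) (mixedPartial F I (s, u)) I s := by
  have hS : UniqueDiffOn ℝ (I ×ˢ (univ : Set ℝ)) := hI.prod uniqueDiffOn_univ
  have hF' := (hF.fderivWithin hS (by norm_num : (1:WithTop ℕ∞) + 1 ≤ 2)).differentiableOn
    one_ne_zero (s, u) (mk_mem_prod hs (mem_univ u))
  have h := hF'.hasFDerivWithinAt.hasDerivWithinAt_fst_slice.clm_apply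
    (hasDerivWithinAt_const s I ((0:ℝ), (1:ℝ)))
  rw [map_zero, add_zero] at h
  exact h.congr_of_mem (fun σ hσ =>
    deriv_eq_fderivWithin_uncurry (hF.differentiableOn two_ne_zero) hσ) hs

lemma hasDerivAt_derivWithin_mixedPartial (hs : s ∈ I) (hs' : s ∈ closure (interior I)) :
    HasDerivAt (fun v => derivWithin (F · v) I s) (mixedPartial F I (s, u)) u := by
  have hS : UniqueDiffOn ℝ (I ×ˢ (univ : Set ℝ)) := hI.prod uniqueDiffOn_univ
  have hF' := (hF.fderivWithin hS (by norm_num : (1:WithTop ℕ∞) + 1 ≤ 2)).differentiableOn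
    one_ne_zero (s, u) (mk_mem_prod hs (mem_univ u))
  have h := (hF'.hasFDerivWithinAt.hasDerivAt_snd_slice hs).clm_apply
    (hasDerivAt_const u ((1:ℝ), (0:ℝ)))
  have hsymm := (hF (s, u) (mk_mem_prod hs (mem_univ u))).isSymmSndFDerivWithinAt
    (by simp) hS (by simpa [interior_prod_eq, closure_prod_eq] using hs')
    (mk_mem_prod hs (mem_univ u))
  rw [map_zero, add_zero, hsymm] at h
  refine h.congr_of_eventuallyEq (Eventually.of_forall fun v => ?_)
  exact ((hF.differentiableOn two_ne_zero (s, v) (mk_mem_prod hs (mem_univ v))).hasFDerivWithinAt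
    |>.hasDerivWithinAt_fst_slice.derivWithin (hI s hs))

end PartialDerivatives

namespace IsSmoothClosedFamily

variable {T t : ℝ} {X : ℝ → ℝ → E2} (hX : IsSmoothClosedFamily T X) (ht : t ∈ Ico 0 T)
include hX ht

lemma hasDerivWithinAt_curveLength_mixedPartial :
    HasDerivWithinAt (fun s => curveLength (X s))
      (∫ u in (0:ℝ)..1, ⟪mixedPartial X (Ico 0 T) (t, u), unitTangent (X t) u⟫) (Ico 0 T) t := by
  have hreg : ∀ s ∈ Ico 0 T, ∀ u, deriv (X s) u ≠ 0 := fun s hs => (hX.2 s hs).2.2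
  have hg := continuousOn_deriv_uncurry (hX.1.of_le one_le_two) (uniqueDiffOn_Ico 0 T)
  have hM := continuousOn_mixedPartial hX.1 (uniqueDiffOn_Ico 0 T)
  have h := hasDerivWithinAt_intervalIntegral_of_continuousOn (convex_Ico 0 T) ht zero_le_one
    (φ := fun s u => ‖deriv (X s) u‖)
    (ψ := fun s u => ⟪mixedPartial X (Ico 0 T) (s, u), deriv (X s) u⟫ / ‖deriv (X s) u‖)
    (fun s hs u _ =>
      (hasDerivWithinAt_deriv_mixedPartial hX.1 (uniqueDiffOn_Ico 0 T) hs).norm (hreg s hs u))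
    (((hM.inner hg).div hg.norm fun p hp => norm_ne_zero_iff.2 (hreg p.1 hp.1 p.2)).mono
      (prod_mono subset_rfl (subset_univ _)))
    (fun s hs => ((hX.2 s hs).1.continuous_deriv one_le_two).norm.intervalIntegrable _ _)
  refine h.congr_deriv (intervalIntegral.integral_congr fun u _ => ?_)
  simp only [unitTangent, real_inner_smul_right, div_eq_inv_mul]

lemma periodic_derivWithin : Periodic (fun u => derivWithin (fun s => X s u) (Ico 0 T) t) 1 :=
  fun u => derivWithin_congr (fun s hs => (hX.2 s hs).2.1 u) ((hX.2 t ht).2.1 u)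

theorem hasDerivWithinAt_curveLength :
    HasDerivWithinAt (fun s => curveLength (X s))
      (∫ u in (0:ℝ)..1, curvature (X t) u * ‖deriv (X t) u‖ *
        ⟪derivWithin (fun s => X s u) (Ico 0 T) t, unitNormal (X t) u⟫) (Ico 0 T) t := by
  obtain ⟨hY, -, hreg⟩ := hX.2 t ht
  have ht' : t ∈ closure (interior (Ico 0 T)) := by
    rw [interior_Ico, closure_Ioo (ht.1.trans_lt ht.2).ne]
    exact Ico_subset_Icc_self ht
  have hV := fun u => hasDerivAt_derivWithin_mixedPartial (u := u) hX.1 (uniqueDiffOn_Ico 0 T)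
    ht ht'
  have hM : Continuous fun u => mixedPartial X (Ico 0 T) (t, u) :=
    (continuousOn_mixedPartial hX.1 (uniqueDiffOn_Ico 0 T)).comp_continuous
      (continuous_const.prodMk continuous_id) fun u => mk_mem_prod ht (mem_univ u)
  have hτ := contDiff_unitTangent hY hreg
  convert hX.hasDerivWithinAt_curveLength_mixedPartial ht using 1
  rw [integral_inner_deriv_eq_neg_of_periodic hV
    (fun u => (hτ.differentiable one_ne_zero u).hasDerivAt) hM (hτ.continuous_deriv le_rfl)
    (hX.periodic_derivWithin ht) (hX.2 t ht).periodic_unitTangent,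
    ← intervalIntegral.integral_neg]
  refine intervalIntegral.integral_congr fun u _ => ?_
  simp only [deriv_unitTangent hY hreg, real_inner_smul_right]
  ring

lemma hasDerivWithinAt_curveLength_of_normalVelocity
    (hflow : ∀ u, ⟪derivWithin (fun s => X s u) (Ico 0 T) t, unitNormal (X t) u⟫ =
      -curvature (X t) u +
        (curveLength (X t))⁻¹ * ∫ w in (0:ℝ)..1, curvature (X t) w * ‖deriv (X t) w‖) :
    HasDerivWithinAt (fun s => curveLength (X s))
      (-weightedVariance (curvature (X t)) (fun u => ‖deriv (X t) u‖) 0 1) (Ico 0 T) t := by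
  have hκ := continuous_curvature (hX.2 t ht).1 (hX.2 t ht).2.2
  have hg := ((hX.2 t ht).1.continuous_deriv one_le_two).norm
  set c := (curveLength (X t))⁻¹ * ∫ w in (0:ℝ)..1, curvature (X t) w * ‖deriv (X t) w‖ with hc
  have hpt : ∀ u, curvature (X t) u * ‖deriv (X t) u‖ * (-curvature (X t) u + c) =
      -(curvature (X t) u ^ 2 * ‖deriv (X t) u‖) + c * (curvature (X t) u * ‖deriv (X t) u‖) :=
    fun u => by ring
  convert hX.hasDerivWithinAt_curveLength ht using 1
  simp only [hflow, hpt]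
  have h1 : IntervalIntegrable (fun u => -(curvature (X t) u ^ 2 * ‖deriv (X t) u‖)) volume 0 1 :=
    ((hκ.pow 2).mul hg).neg.intervalIntegrable _ _
  have h2 : IntervalIntegrable (fun u => c * (curvature (X t) u * ‖deriv (X t) u‖)) volume 0 1 :=
    ((hκ.mul hg).const_mul c).intervalIntegrable _ _
  rw [intervalIntegral.integral_add h1 h2, intervalIntegral.integral_neg,
    intervalIntegral.integral_const_mul, neg_weightedVariance, hc, curveLength]
  ring

end IsSmoothClosedFamily

/-- Under the area-preserving mean-curvature flow, the length satisfies
`dL/dt = -∫₀¹ κ² |∂ᵤX| du + (1/L) (∫₀¹ κ |∂ᵤX| du)² ≤ 0`, so `L` is non-increasing,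
with equality `dL/dt = 0` iff the curvature is constant in `u`. -/
theorem length_decreases_under_conserved_mcf (T : ℝ) (X : ℝ → ℝ → E2)
    (hX : IsSmoothClosedFamily T X)
    (hflow : ∀ t ∈ Ico (0:ℝ) T, ∀ u : ℝ,
      ⟪derivWithin (fun s => X s u) (Ico 0 T) t, unitNormal (X t) u⟫ =
        -curvature (X t) u +
          (curveLength (X t))⁻¹ * ∫ w in (0:ℝ)..1, curvature (X t) w * ‖deriv (X t) w‖) :
    (∀ t ∈ Ico (0:ℝ) T,
      HasDerivWithinAt (fun s => curveLength (X s))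
        (-(∫ u in (0:ℝ)..1, (curvature (X t) u)^2 * ‖deriv (X t) u‖) +
          (curveLength (X t))⁻¹ * (∫ u in (0:ℝ)..1, curvature (X t) u * ‖deriv (X t) u‖)^2)
        (Ico 0 T) t ∧
      (-(∫ u in (0:ℝ)..1, (curvature (X t) u)^2 * ‖deriv (X t) u‖) +
          (curveLength (X t))⁻¹ * (∫ u in (0:ℝ)..1, curvature (X t) u * ‖deriv (X t) u‖)^2 ≤ 0) ∧
      ((-(∫ u in (0:ℝ)..1, (curvature (X t) u)^2 * ‖deriv (X t) u‖) +
          (curveLength (X t))⁻¹ * (∫ u in (0:ℝ)..1, curvature (X t) u * ‖deriv (X t) u‖)^2 = 0) ↔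
        ∃ c : ℝ, ∀ u : ℝ, curvature (X t) u = c)) ∧
    AntitoneOn (fun t => curveLength (X t)) (Ico 0 T) := by
  have hrate := fun t ht => hX.hasDerivWithinAt_curveLength_of_normalVelocity ht (hflow t ht)
  have hκ := fun t ht => continuous_curvature (hX.2 t ht).1 (hX.2 t ht).2.2
  have hg := fun t ht => ((hX.2 t ht).1.continuous_deriv one_le_two).norm
  have hvar : ∀ t ∈ Ico (0:ℝ) T,
      0 ≤ weightedVariance (curvature (X t)) (fun u => ‖deriv (X t) u‖) 0 1 := fun t ht =>
    weightedVariance_nonneg (hκ t ht) (hg t ht) (fun _ _ => norm_nonneg _) zero_le_one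
  refine ⟨fun t ht => ?_, antitoneOn_of_hasDerivWithinAt_nonpos (convex_Ico 0 T)
    (fun t ht => (hrate t ht).continuousWithinAt)
    (fun t ht => (hrate t (interior_subset ht)).mono interior_subset)
    (fun t ht => neg_nonpos.2 (hvar t (interior_subset ht)))⟩
  rw [show curveLength (X t) = ∫ u in (0:ℝ)..1, ‖deriv (X t) u‖ from rfl, ← neg_weightedVariance,
    neg_eq_zero, weightedVariance_eq_zero_iff (hκ t ht) (hg t ht)
      (fun u _ => norm_pos_iff.2 ((hX.2 t ht).2.2 u)) zero_lt_one,
    (hX.2 t ht).periodic_curvature.exists_forall_eq_iff_Icc zero_lt_one]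
  exact ⟨hrate t ht, neg_nonpos.2 (hvar t ht), Iff.rfl⟩
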